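/- arXiv:1304.4404 — 3 statements merged into one kernel-verified Lean document; each statement's English description precedes it below -/
import Mathlib

section
/- For every natural number r and all natural numbers k, i with 0 ≤ k ≤ i ≤ r, the integer T(r,i,k) := ∑_{j=k}^{i} (-1)^{j+k} · C(r-j, i-j) · C(r+1-k, j-k) equals (-1)^{i+k}. (Here C(a,b) denotes the binomial coefficient.) -/
/-!
With `n = i - k` and `d = r - i`, the sum is the coefficient of `X^n` in
`(1 - X)^(n + d + 1) * (1 - X)^-(d + 1) = (1 - X)^n`: the first factor contributes
`(-1)^a C(n + d + 1, a)` and the second `C(d + b, d)` for `a + b = n`.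
-/

open PowerSeries Finset

theorem PowerSeries.coeff_one_sub_X_pow {R : Type*} [CommRing R] (N m : ℕ) :
    coeff m ((1 - X : R⟦X⟧) ^ N) = (-1) ^ m * N.choose m := by
  have h : (1 - X : R⟦X⟧) ^ N = rescale (-1) ((1 + Polynomial.X) ^ N : Polynomial R) := by
    simp [sub_eq_add_neg, rescale_X]
  rw [h, coeff_rescale, Polynomial.coeff_coe, Polynomial.coeff_one_add_X_pow]

theorem sum_antidiagonal_neg_one_pow_mul_choose_mul_choose {R : Type*} [CommRing R] (n d : ℕ) :
    ∑ p ∈ antidiagonal n, (-1 : R) ^ p.1 * (n + d + 1).choose p.1 * (d + p.2).choose d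
      = (-1) ^ n := by
  have h := congrArg (coeff n) (one_sub_pow_add_mul_invOneSubPow_val_eq_one_sub_pow R n (d + 1))
  rw [invOneSubPow_val_succ_eq_mk_add_choose, coeff_mul, coeff_one_sub_X_pow] at h
  simpa [coeff_one_sub_X_pow, ← add_assoc, mul_assoc] using h

/-- For every natural number `r` and all naturals `k ≤ i ≤ r`, the integer
`T(r,i,k) = ∑_{j=k}^{i} (-1)^{j+k} · C(r-j, i-j) · C(r+1-k, j-k)` equals `(-1)^{i+k}`. -/
theorem binomial_identity_T (r i k : ℕ) (hki : k ≤ i) (hir : i ≤ r) :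
    ∑ j ∈ Finset.Icc k i,
      (-1 : ℤ) ^ (j + k) * ((r - j).choose (i - j)) * ((r + 1 - k).choose (j - k))
      = (-1 : ℤ) ^ (i + k) := by
  obtain ⟨n, rfl⟩ : ∃ n, i = k + n := ⟨i - k, by omega⟩
  obtain ⟨d, rfl⟩ : ∃ d, r = k + n + d := ⟨r - (k + n), by omega⟩
  have neg_one_pow_add_add_self (m : ℕ) : (-1 : ℤ) ^ (k + m + k) = (-1) ^ m := by
    rw [add_right_comm, ← two_mul, pow_add, pow_mul, neg_one_sq, one_pow, one_mul]
  rw [← Ico_add_one_right_eq_Icc, sum_Ico_eq_sum_range, neg_one_pow_add_add_self,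
    ← sum_antidiagonal_neg_one_pow_mul_choose_mul_choose n d,
    Nat.sum_antidiagonal_eq_sum_range_succ
      (fun a b => (-1 : ℤ) ^ a * ((n + d + 1).choose a : ℤ) * ((d + b).choose d : ℤ))]
  refine sum_congr (by congr 1; omega) fun a ha_mem => ?_
  have ha : a ≤ n := Nat.lt_succ_iff.mp (mem_range.mp ha_mem)
  rw [neg_one_pow_add_add_self, show k + n + d + 1 - k = n + d + 1 by omega,
    show k + n + d - (k + a) = d + (n - a) by omega, show k + n - (k + a) = n - a by omega,
    Nat.add_sub_cancel_left, ← Nat.choose_symm_add]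
  ring
end

section
/- For every natural number r and all natural numbers k, i with 0 ≤ k ≤ i < r, one has T(r, i+1, k+1) = T(r, i, k), where T(r,i,k) := ∑_{j=k}^{i} (-1)^{j+k} · C(r-j, i-j) · C(r+1-k, j-k). -/
/-!
Both sides equal `(-1)^(i+k)`. Substituting `j = k + m`, `s = r - k`, `n = i - k` turns `T(r,i,k)`
into `∑ₘ (-1)^m C(s+1, m) C(s-m, n-m)`. Since `C(s-m, n-m) = (-1)^(n-m) C(-(s-n+1), n-m)`, the
Chu–Vandermonde identity in the binomial ring `ℤ` evaluates the sum as `(-1)^n C(n, n) = (-1)^n`.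
-/

open Finset

theorem Ring.choose_neg_natCast_succ (a l : ℕ) :
    Ring.choose (-((a + 1 : ℕ) : ℤ)) l = (-1) ^ l * ((a + l).choose l : ℤ) := by
  rw [Ring.choose_neg, Units.smul_def, Int.coe_negOnePow_natCast, smul_eq_mul,
    ← Ring.choose_natCast]
  push_cast
  ring_nf

theorem neg_one_pow_add_two_mul (a b : ℕ) : (-1 : ℤ) ^ (a + 2 * b) = (-1) ^ a := by
  rw [pow_add, pow_mul, neg_one_sq, one_pow, mul_one]

theorem sum_range_neg_one_pow_mul_choose_mul_choose {s n : ℕ} (hns : n ≤ s) :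
    ∑ m ∈ range (n + 1), (-1 : ℤ) ^ m * ((s - m).choose (n - m)) * ((s + 1).choose m)
      = (-1) ^ n := by
  have hsum : ((s + 1 : ℕ) : ℤ) + -((s - n + 1 : ℕ) : ℤ) = n := by push_cast [hns]; ring
  calc _ = ∑ m ∈ range (n + 1), (-1) ^ n *
        (Ring.choose ((s + 1 : ℕ) : ℤ) m * Ring.choose (-((s - n + 1 : ℕ) : ℤ)) (n - m)) := by
        refine sum_congr rfl fun m hm => ?_
        have hmn : m ≤ n := Nat.lt_succ_iff.mp (mem_range.mp hm)
        have hsign : (-1 : ℤ) ^ n = (-1) ^ m * (-1) ^ (n - m) := by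
          rw [← pow_add, Nat.add_sub_cancel' hmn]
        have hsq : ((-1 : ℤ) ^ (n - m)) ^ 2 = 1 := by
          rw [← pow_mul, mul_comm, pow_mul, neg_one_sq, one_pow]
        rw [Ring.choose_natCast, Ring.choose_neg_natCast_succ, hsign,
          show s - n + (n - m) = s - m by omega]
        linear_combination -(-1 : ℤ) ^ m * ((s - m).choose (n - m)) * ((s + 1).choose m) * hsq
    _ = (-1) ^ n * Ring.choose (((s + 1 : ℕ) : ℤ) + -((s - n + 1 : ℕ) : ℤ)) n := by
        rw [Ring.add_choose_eq _ (Commute.all _ _), Nat.sum_antidiagonal_eq_sum_range_succ_mk,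
          mul_sum]
    _ = (-1) ^ n := by rw [hsum, Ring.choose_natCast, Nat.choose_self, Nat.cast_one, mul_one]

def binomialT (r i k : ℕ) : ℤ :=
  ∑ j ∈ Icc k i, (-1 : ℤ) ^ (j + k) * ((r - j).choose (i - j)) * ((r + 1 - k).choose (j - k))

theorem binomialT_eq_neg_one_pow {r i k : ℕ} (hki : k ≤ i) (hir : i ≤ r) :
    binomialT r i k = (-1) ^ (i + k) := by
  rw [show i + k = (i - k) + 2 * k by omega, neg_one_pow_add_two_mul,
    ← sum_range_neg_one_pow_mul_choose_mul_choose (Nat.sub_le_sub_right hir k),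
    binomialT, ← Ico_add_one_right_eq_Icc, sum_Ico_eq_sum_range, show i + 1 - k = i - k + 1 by omega]
  refine sum_congr rfl fun m _ => ?_
  rw [show k + m + k = m + 2 * k by omega, neg_one_pow_add_two_mul,
    show r - (k + m) = r - k - m by omega, show i - (k + m) = i - k - m by omega,
    show r + 1 - k = r - k + 1 by omega, Nat.add_sub_cancel_left]

/-- Shift invariance of `T(r,i,k)`: for all naturals `k ≤ i < r`,
`T(r, i+1, k+1) = T(r, i, k)`, where
`T(r,i,k) = ∑_{j=k}^{i} (-1)^{j+k} · C(r-j, i-j) · C(r+1-k, j-k)`. -/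
theorem binomial_identity_T_shift (r i k : ℕ) (hki : k ≤ i) (hir : i < r) :
    ∑ j ∈ Finset.Icc (k + 1) (i + 1),
      (-1 : ℤ) ^ (j + (k + 1)) * ((r - j).choose (i + 1 - j)) *
        ((r + 1 - (k + 1)).choose (j - (k + 1)))
      = ∑ j ∈ Finset.Icc k i,
          (-1 : ℤ) ^ (j + k) * ((r - j).choose (i - j)) * ((r + 1 - k).choose (j - k)) := by
  change binomialT r (i + 1) (k + 1) = binomialT r i k
  rw [binomialT_eq_neg_one_pow (by omega) hir, binomialT_eq_neg_one_pow hki hir.le,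
    show i + 1 + (k + 1) = i + k + 2 * 1 by omega, neg_one_pow_add_two_mul]
end

section
/- Let R be a commutative ring, r ≥ 1 a natural number, c : ℕ → R with c(0) = 1, and define τ : ℕ → ℕ → R by: τ(0,j) = 1 if j = 0 and τ(0,j) = 0 otherwise; τ(i+1, j) = 0 for j > r; and τ(i+1, j) = τ(i, j-1) − c(r+1−j)·τ(i, r) for 0 ≤ j ≤ r, where τ(i, j-1) is interpreted as 0 when j = 0. Then for every l ∈ R and all natural numbers j, k: ∑_{i=0}^{j-1} (−1)^i · l^i · ( τ(k+j−i−1, r−1) + τ(k+j−i−1, r)·(l − c(1)) ) = τ(k+j, r) − (−1)^j · l^j · τ(k, r). -/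
/-! Since `τ (n+1) r = τ n (r-1) - c 1 * τ n r`, the summand for index `i` equals
`f i - f (i+1)` with `f i = (-l)^i τ(k+j-i, r)`, so the sum telescopes to `f 0 - f j`. -/

theorem sum_range_neg_pow_mul_telescope {R : Type*} [CommRing R] (t s : ℕ → R) (a l : R)
    (ht : ∀ n, t (n + 1) = s n - a * t n) (j k : ℕ) :
    ∑ i ∈ Finset.range j,
        (-1 : R) ^ i * l ^ i * (s (k + j - i - 1) + t (k + j - i - 1) * (l - a))
      = t (k + j) - (-1 : R) ^ j * l ^ j * t k := by
  have hf : ∀ i ∈ Finset.range j,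
      (-1 : R) ^ i * l ^ i * (s (k + j - i - 1) + t (k + j - i - 1) * (l - a))
        = (-1 : R) ^ i * l ^ i * t (k + j - i)
          - (-1 : R) ^ (i + 1) * l ^ (i + 1) * t (k + j - (i + 1)) := by
    intro i hi
    obtain ⟨m, hm⟩ : ∃ m, k + j - i = m + 1 :=
      ⟨k + j - i - 1, by have := Finset.mem_range.mp hi; omega⟩
    have hm' : k + j - (i + 1) = m := by omega
    rw [hm, hm', show m + 1 - 1 = m from rfl, ht]
    ring
  rw [Finset.sum_congr rfl hf, Finset.sum_range_sub']
  simp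

theorem tau_succ_last {R : Type*} [CommRing R] {r : ℕ} (hr : 1 ≤ r) (c : ℕ → R)
    (τ : ℕ → ℕ → R)
    (hτrec : ∀ i j, j ≤ r →
      τ (i + 1) j = (if j = 0 then 0 else τ i (j - 1)) - c (r + 1 - j) * τ i r)
    (n : ℕ) : τ (n + 1) r = τ n (r - 1) - c 1 * τ n r := by
  rw [hτrec n r le_rfl, if_neg (by omega), Nat.add_sub_cancel_left]

theorem telescoping_identity_general (R : Type*) [CommRing R] (r : ℕ) (hr : 1 ≤ r)
    (c : ℕ → R)
    (τ : ℕ → ℕ → R)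
    (hτrec : ∀ i j, j ≤ r →
      τ (i + 1) j = (if j = 0 then 0 else τ i (j - 1)) - c (r + 1 - j) * τ i r)
    (l : R) (j k : ℕ) :
    ∑ i ∈ Finset.range j,
        (-1 : R) ^ i * l ^ i *
          (τ (k + j - i - 1) (r - 1) + τ (k + j - i - 1) r * (l - c 1))
      = τ (k + j) r - (-1 : R) ^ j * l ^ j * τ k r :=
  sum_range_neg_pow_mul_telescope (τ · r) (τ · (r - 1)) (c 1) l
    (tau_succ_last hr c τ hτrec) j k

/-- Let `R` be a commutative ring, `r ≥ 1`, `c : ℕ → R` with `c 0 = 1`, and let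
`τ : ℕ → ℕ → R` be defined by `τ 0 j = δ_{0,j}`, `τ (i+1) j = 0` for `j > r`, and
`τ (i+1) j = τ i (j-1) - c (r+1-j) · τ i r` for `0 ≤ j ≤ r` (with `τ i (j-1)` read as `0`
when `j = 0`).  Then for every `l ∈ R` and all naturals `j, k`:
`∑_{i=0}^{j-1} (-1)^i l^i (τ(k+j-i-1, r-1) + τ(k+j-i-1, r)·(l - c 1))
  = τ(k+j, r) - (-1)^j l^j τ(k, r)`. -/
theorem telescoping_identity (R : Type*) [CommRing R] (r : ℕ) (hr : 1 ≤ r)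
    (c : ℕ → R) (hc0 : c 0 = 1)
    (τ : ℕ → ℕ → R)
    (hτ0 : ∀ j, τ 0 j = if j = 0 then 1 else 0)
    (hτgt : ∀ i j, r < j → τ (i + 1) j = 0)
    (hτrec : ∀ i j, j ≤ r →
      τ (i + 1) j = (if j = 0 then 0 else τ i (j - 1)) - c (r + 1 - j) * τ i r)
    (l : R) (j k : ℕ) :
    ∑ i ∈ Finset.range j,
        (-1 : R) ^ i * l ^ i *
          (τ (k + j - i - 1) (r - 1) + τ (k + j - i - 1) r * (l - c 1))
      = τ (k + j) r - (-1 : R) ^ j * l ^ j * τ k r :=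
  telescoping_identity_general R r hr c τ hτrec l j k
end
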